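/- For an element x of H with core c, let x^R denote the element of H whose core is the reversal of c. Suppose x and y are distinct elements of H such that x and y are adjacent in the unimodal order and x^R and y^R are also adjacent in the unimodal order. Then the cores of x and y are the two one-symbol strings (+) and (−). (This is the symbolic content of the theorem that the first homoclinic bifurcation of the invariant manifolds of the fixed point of the area preserving Hénon map is the saddle-node bifurcation of the pair of homoclinic orbits with cores (+) and (−).) -/

import Mathlib

/-!
`x <_u y` means that at the first index `n` where they differ, the number of `−`'s in `x`
up to and including `n` is odd. Past such an `n`, an index where that count is even for `y`, or
odd for `x`, yields an element of `H` strictly between `x` and `y`: cut `y` (resp. `x`) there and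
flip the symbol. So for adjacent elements of `H` these parities are constant after `n`, which forces
both cores to end at `n`: adjacent cores are `p ++ [a]` and `p ++ [b]` with `a ≠ b`. Reversed, they
become `a :: pᴿ` and `b :: pᴿ`, which differ in their first symbol, so they can only be adjacent
again when `p = []`.
-/

/-- Symbols: `true` stands for `+`, `false` stands for `−`.
The unimodal order on one-sided sequences: `a <_u b` iff they differ, and at the
first index `n` where they differ, `a n = −` exactly when the number of `−`
symbols among `a 0, …, a (n−1)` is even. -/
def UnimodalLt (a b : ℕ → Bool) : Prop :=
  ∃ n : ℕ, (∀ m : ℕ, m < n → a m = b m) ∧ a n ≠ b n ∧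
    (a n = false ↔ Even (((Finset.range n).filter (fun m => a m = false)).card))

/-- The homoclinic sequence with core `c`: the finite string `c`, followed by a
single `−`, followed by the constant sequence of `+`'s. -/
def homSeq (c : List Bool) : ℕ → Bool := fun n => (c ++ [false]).getD n true

/-- `H` is the set of all homoclinic sequences. -/
def homSet : Set (ℕ → Bool) := Set.range homSeq

/-- Two sequences are adjacent (neighbors) if they are distinct and no element
of `H` lies strictly between them in the unimodal order. -/
def HomAdjacent (x y : ℕ → Bool) : Prop :=
  x ≠ y ∧ ¬ ∃ z ∈ homSet,
    (UnimodalLt x z ∧ UnimodalLt z y) ∨ (UnimodalLt y z ∧ UnimodalLt z x)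

def negCount (a : ℕ → Bool) (n : ℕ) : ℕ :=
  ((Finset.range n).filter (fun m => a m = false)).card

lemma odd_negCount_succ_iff (a : ℕ → Bool) (n : ℕ) :
    Odd (negCount a (n + 1)) ↔ (Odd (negCount a n) ↔ a n = true) := by
  unfold negCount
  rw [Finset.range_add_one, Finset.filter_insert]
  cases a n
  · rw [if_pos rfl, Finset.card_insert_of_notMem (by simp), Nat.odd_add_one]
    simp
  · simp

lemma negCount_congr {a b : ℕ → Bool} {n : ℕ} (h : ∀ m < n, a m = b m) :
    negCount a n = negCount b n :=
  congrArg Finset.card <| Finset.filter_congr fun m hm => by rw [h m (Finset.mem_range.mp hm)]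

lemma odd_negCount_succ_iff_not_odd {a b : ℕ → Bool} {n : ℕ} (hag : ∀ m < n, a m = b m)
    (hne : a n ≠ b n) : Odd (negCount a (n + 1)) ↔ ¬ Odd (negCount b (n + 1)) := by
  rw [odd_negCount_succ_iff, odd_negCount_succ_iff, negCount_congr hag]
  cases ha : a n <;> cases hb : b n <;> simp_all

lemma unimodalLt_of_odd_negCount {a b : ℕ → Bool} {n : ℕ} (hag : ∀ m < n, a m = b m)
    (hne : a n ≠ b n) (hodd : Odd (negCount a (n + 1))) : UnimodalLt a b := by
  refine ⟨n, hag, hne, ?_⟩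
  rw [odd_negCount_succ_iff] at hodd
  change a n = false ↔ Even (negCount a n)
  rw [← Nat.not_odd_iff_even, hodd]
  cases a n <;> simp

lemma homSeq_of_lt {l : List Bool} {m : ℕ} (h : m < l.length) : homSeq l m = l[m] := by
  simp [homSeq, List.getD_eq_getElem?_getD, List.getElem?_append_left h, h]

lemma homSeq_length (l : List Bool) : homSeq l l.length = false := by
  simp [homSeq, List.getD_eq_getElem?_getD]

lemma homSeq_of_length_lt {l : List Bool} {m : ℕ} (h : l.length < m) : homSeq l m = true :=
  List.getD_eq_default _ _ (by simpa using h)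

lemma length_eq_of_homSeq {l : List Bool} {k : ℕ} (hk : homSeq l k = false)
    (h : ∀ m > k, homSeq l m = true) : l.length = k := by
  rcases lt_trichotomy l.length k with hlt | heq | hgt
  · simp [homSeq_of_length_lt hlt] at hk
  · exact heq
  · simpa [homSeq_length] using h _ hgt

lemma exists_homSeq_prefix (a : ℕ → Bool) (j : ℕ) (b : Bool) :
    ∃ z ∈ homSet, (∀ m < j, z m = a m) ∧ z j = b := by
  refine ⟨homSeq (List.ofFn (fun i : Fin j => a i) ++ [b]), ⟨_, rfl⟩, fun m hm => ?_, ?_⟩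
  · rw [homSeq_of_lt (by simp; omega), List.getElem_append_left (by simpa using hm)]
    simp
  · rw [homSeq_of_lt (by simp)]
    simp

section Between

variable {x y : ℕ → Bool} {n j : ℕ}

lemma exists_between_of_not_odd_right (hnj : n < j) (hag : ∀ m < n, x m = y m)
    (hne : x n ≠ y n) (hodd : Odd (negCount x (n + 1))) (heven : ¬ Odd (negCount y (j + 1))) :
    ∃ z ∈ homSet, UnimodalLt x z ∧ UnimodalLt z y := by
  obtain ⟨z, hz, hzy, hzj⟩ := exists_homSeq_prefix y j (!y j)
  have hzj' : z j ≠ y j := by simp [hzj]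
  refine ⟨z, hz, unimodalLt_of_odd_negCount (fun m hm => ?_) ?_ hodd,
    unimodalLt_of_odd_negCount hzy hzj' ((odd_negCount_succ_iff_not_odd hzy hzj').2 heven)⟩
  · rw [hag m hm, hzy m (by omega)]
  · rwa [hzy n hnj]

lemma exists_between_of_odd_left (hnj : n < j) (hag : ∀ m < n, x m = y m)
    (hne : x n ≠ y n) (hodd : Odd (negCount x (n + 1))) (hodd' : Odd (negCount x (j + 1))) :
    ∃ z ∈ homSet, UnimodalLt x z ∧ UnimodalLt z y := by
  obtain ⟨z, hz, hzx, hzj⟩ := exists_homSeq_prefix x j (!x j)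
  have hxz : ∀ m < j, x m = z m := fun m hm => (hzx m hm).symm
  refine ⟨z, hz, unimodalLt_of_odd_negCount hxz (by simp [hzj]) hodd', ?_⟩
  refine unimodalLt_of_odd_negCount (fun m hm => ?_) (by rwa [hzx n hnj]) ?_
  · rw [hzx m (by omega), hag m hm]
  · rwa [negCount_congr fun m hm => hzx m (by omega)]

end Between

lemma length_eq_of_odd_negCount_iff {l : List Bool} {n : ℕ} {P : Prop}
    (hn : Odd (negCount (homSeq l) (n + 1)) ↔ ¬ P)
    (h : ∀ j > n, Odd (negCount (homSeq l) (j + 1)) ↔ P) : l.length = n + 1 := by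
  refine length_eq_of_homSeq ?_ fun m hm => ?_
  · have := h (n + 1) (by omega)
    rw [odd_negCount_succ_iff] at this
    rw [← Bool.not_eq_true]
    tauto
  · obtain ⟨k, rfl⟩ : ∃ k, m = k + 1 := ⟨m - 1, by omega⟩
    have := h (k + 1) (by omega)
    rw [odd_negCount_succ_iff, h k (by omega)] at this
    tauto

lemma length_eq_of_not_exists_between {l l' : List Bool} {n : ℕ}
    (hag : ∀ m < n, homSeq l m = homSeq l' m) (hne : homSeq l n ≠ homSeq l' n)
    (hodd : Odd (negCount (homSeq l) (n + 1)))
    (hgap : ¬ ∃ z ∈ homSet, UnimodalLt (homSeq l) z ∧ UnimodalLt z (homSeq l')) :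
    l.length = n + 1 ∧ l'.length = n + 1 := by
  constructor
  · refine length_eq_of_odd_negCount_iff (P := False) (by simpa) fun j hj => ?_
    simpa using fun hodd' => hgap (exists_between_of_odd_left hj hag hne hodd hodd')
  · refine length_eq_of_odd_negCount_iff (P := True)
      (by simpa using (odd_negCount_succ_iff_not_odd hag hne).1 hodd) fun j hj => ?_
    simpa using not_not.1 fun heven => hgap (exists_between_of_not_odd_right hj hag hne hodd heven)

lemma exists_eq_append_of_homSeq {l l' : List Bool} {n : ℕ} (hl : l.length = n + 1)
    (hl' : l'.length = n + 1) (hag : ∀ m < n, homSeq l m = homSeq l' m)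
    (hne : homSeq l n ≠ homSeq l' n) :
    ∃ p a b, a ≠ b ∧ l = p ++ [a] ∧ l' = p ++ [b] := by
  obtain ⟨p, a, rfl⟩ := (List.eq_nil_or_concat' l).resolve_left (by rintro rfl; simp at hl)
  obtain ⟨q, b, rfl⟩ := (List.eq_nil_or_concat' l').resolve_left (by rintro rfl; simp at hl')
  simp only [List.length_append, List.length_singleton, Nat.add_right_cancel_iff] at hl hl'
  subst hl
  have hpq : p = q := List.ext_getElem (by omega) fun m hm hm' => by
    have := hag m hm
    rwa [homSeq_of_lt (by simp; omega), homSeq_of_lt (by simp; omega),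
      List.getElem_append_left hm, List.getElem_append_left hm'] at this
  subst hpq
  refine ⟨p, a, b, fun hab => hne ?_, rfl, rfl⟩
  simp [homSeq_of_lt, hab]

lemma HomAdjacent.exists_eq_append {l l' : List Bool} (h : HomAdjacent (homSeq l) (homSeq l')) :
    ∃ p a b, a ≠ b ∧ l = p ++ [a] ∧ l' = p ++ [b] := by
  classical
  have hex : ∃ n, homSeq l n ≠ homSeq l' n := Function.ne_iff.1 h.1
  set n := Nat.find hex
  have hag : ∀ m < n, homSeq l m = homSeq l' m := fun m hm => not_not.1 (Nat.find_min hex hm)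
  have hne : homSeq l n ≠ homSeq l' n := Nat.find_spec hex
  have hlen : l.length = n + 1 ∧ l'.length = n + 1 := by
    by_cases hodd : Odd (negCount (homSeq l) (n + 1))
    · exact length_eq_of_not_exists_between hag hne hodd fun ⟨z, hz, hlt⟩ => h.2 ⟨z, hz, .inl hlt⟩
    · have hodd' := not_not.1 ((odd_negCount_succ_iff_not_odd hag hne).not.1 hodd)
      exact (length_eq_of_not_exists_between (fun m hm => (hag m hm).symm) hne.symm hodd'
        fun ⟨z, hz, hlt⟩ => h.2 ⟨z, hz, .inr hlt⟩).symm
  exact exists_eq_append_of_homSeq hlen.1 hlen.2 hag hne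

theorem first_homoclinic_bifurcation_general (c c' : List Bool)
    (hU : HomAdjacent (homSeq c) (homSeq c'))
    (hS : HomAdjacent (homSeq c.reverse) (homSeq c'.reverse)) :
    (c = [true] ∧ c' = [false]) ∨ (c = [false] ∧ c' = [true]) := by
  obtain ⟨p, a, b, hab, rfl, rfl⟩ := hU.exists_eq_append
  obtain ⟨q, a', b', -, hq, hq'⟩ := hS.exists_eq_append
  simp only [List.reverse_append, List.reverse_singleton, List.singleton_append] at hq hq'
  obtain rfl : p = [] := by
    rcases q with _ | ⟨d, q⟩
    · simp only [List.nil_append, List.cons.injEq, List.reverse_eq_nil_iff] at hq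
      exact hq.2
    · exact absurd ((List.cons_eq_cons.1 hq).1.trans (List.cons_eq_cons.1 hq').1.symm) hab
  revert hab
  cases a <;> cases b <;> simp

/-- **The first homoclinic bifurcation of the area preserving Hénon map (symbolic
content).** If two distinct homoclinic sequences are adjacent in the unimodal
order, and the sequences with reversed cores are also adjacent (double
neighbors, by time-reversal symmetry), then the cores are the two one-symbol
strings `(+)` and `(−)`. -/
theorem first_homoclinic_bifurcation (c c' : List Bool) (hcc' : c ≠ c')
    (hU : HomAdjacent (homSeq c) (homSeq c'))
    (hS : HomAdjacent (homSeq c.reverse) (homSeq c'.reverse)) :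
    (c = [true] ∧ c' = [false]) ∨ (c = [false] ∧ c' = [true]) :=
  first_homoclinic_bifurcation_general c c' hU hS
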